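/- arXiv:0812.2159 — 2 statements merged into one kernel-verified Lean document; each statement's English description precedes it below -/
import Mathlib

section
/- Let (P₁,P₂,P₃,P₄) be nonzero null vectors in ℂ^{n,1}, pairwise linearly independent, with normalized Gram matrix G = (g_{ij}). Then the Cartan angular invariants of the four triples satisfy: 𝔸(p₁,p₂,p₃) = arg(−conj(g₁₃)), 𝔸(p₁,p₂,p₄) = arg(−g₂₄·conj(g₁₄)), 𝔸(p₁,p₃,p₄) = arg(−g₁₃·conj(g₁₄)), and 𝔸(p₂,p₃,p₄) = arg(−conj(g₂₄)). -/
open Complex Matrix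
open scoped ComplexConjugate

noncomputable section

/-- The Hermitian form of signature `(n,1)` on `ℂ^{n+1}`:
`⟨Z,W⟩ = Z₁·conj W_{n+1} + Z₂·conj W₂ + ⋯ + Z_n·conj W_n + Z_{n+1}·conj W₁`. -/
def herm {n : ℕ} (Z W : Fin (n + 1) → ℂ) : ℂ :=
  Z 0 * conj (W (Fin.last n)) + Z (Fin.last n) * conj (W 0) +
    ∑ i ∈ Finset.univ.filter (fun i : Fin (n + 1) => i ≠ 0 ∧ i ≠ Fin.last n),
      Z i * conj (W i)

/-- The Gram matrix of a quadruple of vectors. -/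
def gram {n : ℕ} (P : Fin 4 → Fin (n + 1) → ℂ) : Matrix (Fin 4) (Fin 4) ℂ :=
  fun i j => herm (P i) (P j)

/-- A quadruple of nonzero null vectors, pairwise linearly independent. -/
def IsNullQuadruple {n : ℕ} (P : Fin 4 → Fin (n + 1) → ℂ) : Prop :=
  (∀ i, P i ≠ 0) ∧ (∀ i, herm (P i) (P i) = 0) ∧
    ∀ i j, i ≠ j → LinearIndependent ℂ ![P i, P j]

/-- The Korányi–Reimann complex cross-ratio. -/
def crossRatio {n : ℕ} (P₁ P₂ P₃ P₄ : Fin (n + 1) → ℂ) : ℂ :=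
  (herm P₃ P₁ * herm P₄ P₂) / (herm P₄ P₁ * herm P₃ P₂)

/-- Cartan's angular invariant. -/
def cartan {n : ℕ} (P₁ P₂ P₃ : Fin (n + 1) → ℂ) : ℝ :=
  (-(herm P₁ P₂ * herm P₂ P₃ * herm P₃ P₁)).arg

/-- `G` is the normalized Gram matrix of the quadruple `P`. -/
def IsNormalizedGram {n : ℕ} (P : Fin 4 → Fin (n + 1) → ℂ)
    (G : Matrix (Fin 4) (Fin 4) ℂ) : Prop :=
  (∃ d : Fin 4 → ℂ, (∀ i, d i ≠ 0) ∧
      G = (Matrix.diagonal d)ᴴ * gram P * Matrix.diagonal d) ∧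
    G 0 1 = 1 ∧ G 1 2 = 1 ∧ G 2 3 = 1 ∧ ‖G 0 2‖ = 1

/-- Two quadruples are congruent if a linear map preserving the Hermitian form
sends one to the other up to nonzero scalars. -/
def CongruentQuad {n : ℕ} (P P' : Fin 4 → Fin (n + 1) → ℂ) : Prop :=
  ∃ A : (Fin (n + 1) → ℂ) →ₗ[ℂ] (Fin (n + 1) → ℂ),
    (∀ Z W, herm (A Z) (A W) = herm Z W) ∧
    ∃ lam : Fin 4 → ℂ, (∀ i, lam i ≠ 0) ∧ ∀ i, A (P i) = lam i • P' i

/-! Rescaling the vectors `Pᵢ` by nonzero scalars `cᵢ` multiplies the triple product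
`⟨Pᵢ,Pⱼ⟩⟨Pⱼ,Pₖ⟩⟨Pₖ,Pᵢ⟩` by the positive real `|cᵢ|²|cⱼ|²|cₖ|²`, so Cartan's invariant is
unchanged. The normalized Gram matrix is the Gram matrix of such a rescaling, hence each invariant
is `arg (-(gᵢⱼ gⱼₖ gₖᵢ))`, and the normalization `g₁₂ = g₂₃ = g₃₄ = 1` together with
`gⱼᵢ = conj gᵢⱼ` turns these into the four stated expressions. -/

section Herm

variable {n : ℕ}

lemma herm_smul_left (a : ℂ) (Z W : Fin (n + 1) → ℂ) : herm (a • Z) W = a * herm Z W := by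
  simp only [herm, Pi.smul_apply, smul_eq_mul, mul_add, Finset.mul_sum, mul_assoc]

lemma herm_smul_right (b : ℂ) (Z W : Fin (n + 1) → ℂ) :
    herm Z (b • W) = conj b * herm Z W := by
  simp only [herm, Pi.smul_apply, smul_eq_mul, _root_.map_mul, mul_add, Finset.mul_sum,
    mul_left_comm]

lemma herm_conj_symm (Z W : Fin (n + 1) → ℂ) : conj (herm Z W) = herm W Z := by
  simp only [herm, map_add, map_sum, _root_.map_mul, Complex.conj_conj]
  congr 1
  · ring
  · exact Finset.sum_congr rfl fun _ _ => mul_comm _ _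

lemma cartan_smul {a b c : ℂ} (ha : a ≠ 0) (hb : b ≠ 0) (hc : c ≠ 0)
    (Z W V : Fin (n + 1) → ℂ) : cartan (a • Z) (b • W) (c • V) = cartan Z W V := by
  have hscale : -(herm (a • Z) (b • W) * herm (b • W) (c • V) * herm (c • V) (a • Z)) =
      ((normSq a * normSq b * normSq c : ℝ) : ℂ) * -(herm Z W * herm W V * herm V Z) := by
    simp only [herm_smul_left, herm_smul_right]
    push_cast
    rw [← mul_conj, ← mul_conj, ← mul_conj]
    ring
  rw [cartan, cartan, hscale, arg_real_mul]
  exact mul_pos (mul_pos (normSq_pos.mpr ha) (normSq_pos.mpr hb)) (normSq_pos.mpr hc)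

end Herm

lemma IsNormalizedGram.exists_rescaling {n : ℕ} {P : Fin 4 → Fin (n + 1) → ℂ}
    {G : Matrix (Fin 4) (Fin 4) ℂ} (hG : IsNormalizedGram P G) :
    ∃ Q : Fin 4 → Fin (n + 1) → ℂ, gram Q = G ∧
      ∀ i j k, cartan (P i) (P j) (P k) = cartan (Q i) (Q j) (Q k) := by
  obtain ⟨⟨d, hd, rfl⟩, -⟩ := hG
  refine ⟨fun i => conj (d i) • P i, ?_, fun i j k => ?_⟩
  · ext i j
    rw [diagonal_conjTranspose, mul_diagonal, diagonal_mul]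
    simp only [_root_.gram, herm_smul_left, herm_smul_right, Pi.star_apply,
      starRingEnd_apply, star_star]
    ring
  · have hconj : ∀ i, conj (d i) ≠ 0 := fun i => (map_ne_zero _).mpr (hd i)
    exact (cartan_smul (hconj i) (hconj j) (hconj k) _ _ _).symm

theorem stmt3_general (n : ℕ) (P : Fin 4 → Fin (n + 1) → ℂ)
    (G : Matrix (Fin 4) (Fin 4) ℂ) (hG : IsNormalizedGram P G) :
    cartan (P 0) (P 1) (P 2) = (-(conj (G 0 2))).arg ∧
    cartan (P 0) (P 1) (P 3) = (-(G 1 3 * conj (G 0 3))).arg ∧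
    cartan (P 0) (P 2) (P 3) = (-(G 0 2 * conj (G 0 3))).arg ∧
    cartan (P 1) (P 2) (P 3) = (-(conj (G 1 3))).arg := by
  obtain ⟨Q, rfl, hcartan⟩ := hG.exists_rescaling
  obtain ⟨-, h01, h12, h23, -⟩ := hG
  simp only [_root_.gram] at h01 h12 h23 ⊢
  refine ⟨?_, ?_, ?_, ?_⟩ <;> rw [hcartan, cartan]
  · rw [h01, h12, ← herm_conj_symm (Q 0) (Q 2), one_mul, one_mul]
  · rw [h01, ← herm_conj_symm (Q 0) (Q 3), one_mul]
  · rw [h23, ← herm_conj_symm (Q 0) (Q 3), mul_one]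
  · rw [h12, h23, ← herm_conj_symm (Q 1) (Q 3), one_mul, one_mul]

/-- Cartan invariants of the four faces in terms of the
normalized Gram matrix. -/
theorem stmt3 (n : ℕ) (P : Fin 4 → Fin (n + 1) → ℂ) (hP : IsNullQuadruple P)
    (G : Matrix (Fin 4) (Fin 4) ℂ) (hG : IsNormalizedGram P G) :
    cartan (P 0) (P 1) (P 2) = (-(conj (G 0 2))).arg ∧
    cartan (P 0) (P 1) (P 3) = (-(G 1 3 * conj (G 0 3))).arg ∧
    cartan (P 0) (P 2) (P 3) = (-(G 0 2 * conj (G 0 3))).arg ∧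
    cartan (P 1) (P 2) (P 3) = (-(conj (G 1 3))).arg :=
  stmt3_general n P G hG
end
end

section
/- Let (P₁,P₂,P₃,P₄) be nonzero null vectors in ℂ^{n,1}, pairwise linearly independent, with normalized Gram matrix G, and let G(i,j,k) denote the 3×3 principal submatrix of G on rows and columns i,j,k. Then det G(1,2,3) = −2·Re(e^{i𝔸}), det G(1,2,4) = −2·Re(conj(X₁)·e^{i𝔸}/|X₂|²), det G(1,3,4) = −2·Re(conj(X₂)·e^{−i𝔸}/|X₂|²), and det G(2,3,4) = −2·Re(X₁·conj(X₂)·e^{−i𝔸}/|X₂|²), where X₁ = X(p₁,p₂,p₃,p₄), X₂ = X(p₁,p₃,p₂,p₄), 𝔸 = 𝔸(p₁,p₂,p₃). -/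
open Complex Matrix
open scoped ComplexConjugate

noncomputable section

/-- Two quadruples are congruent if a linear map preserving the Hermitian form
sends one to the other up to nonzero scalars. -/
def Congruent' {n : ℕ} (P P' : Fin 4 → Fin (n + 1) → ℂ) : Prop :=
  ∃ A : (Fin (n + 1) → ℂ) →ₗ[ℂ] (Fin (n + 1) → ℂ),
    (∀ Z W, herm (A Z) (A W) = herm Z W) ∧
    ∃ lam : Fin 4 → ℂ, (∀ i, lam i ≠ 0) ∧ ∀ i, A (P i) = lam i • P' i

/-!
The normalized Gram matrix `G` is the Gram matrix of the rescaled quadruple `conj (dᵢ) • Pᵢ`.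
Hence it is Hermitian with zero diagonal, and since the cross-ratios and the Cartan invariant
do not change under rescaling, they can be read off its entries. A Hermitian `3 × 3` matrix with
zero diagonal has determinant `2 Re (g₁₂ g₂₃ g₃₁)`. Writing `a = G 0 2`, `b = G 0 3`, `c = G 1 3`
for the free entries, with `|a| = 1`, one finds `e^{i𝔸} = -conj a`, `X₁ = conj (a c / b)`,
`X₂ = 1 / conj b`, and each of the four formulas reduces to an identity between `a`, `b`, `c`.
-/

section HermitianForm

variable {n : ℕ}

lemma herm_swap (Z W : Fin (n + 1) → ℂ) : herm W Z = conj (herm Z W) := by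
  simp only [herm, map_add, map_sum, map_mul, conj_conj]
  rw [Finset.sum_congr rfl fun i _ => mul_comm (conj (Z i)) (W i)]
  ring

lemma herm_smul_add_smul_self (a b : ℂ) (P Q : Fin (n + 1) → ℂ) :
    herm (a • P + b • Q) (a • P + b • Q) =
      a * conj a * herm P P + a * conj b * herm P Q +
        (b * conj a * herm Q P + b * conj b * herm Q Q) := by
  have expand : ∀ i j : Fin (n + 1),
      (a • P + b • Q) i * conj ((a • P + b • Q) j) =
        a * conj a * (P i * conj (P j)) + a * conj b * (P i * conj (Q j)) +
          (b * conj a * (Q i * conj (P j)) + b * conj b * (Q i * conj (Q j))) := by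
    intro i j
    simp only [Pi.add_apply, Pi.smul_apply, smul_eq_mul, map_add, map_mul]
    ring
  simp only [herm, expand, Finset.sum_add_distrib, ← Finset.mul_sum]
  ring

/-- When `Z 0 = Z (Fin.last n)`, `herm Z Z = 2 |Z 0|² + ∑ |Z i|²` over the middle coordinates. -/
lemma eq_zero_of_herm_self_eq_zero {Z : Fin (n + 1) → ℂ} (h0 : Z 0 = Z (Fin.last n))
    (hZ : herm Z Z = 0) : Z = 0 := by
  set S := Finset.univ.filter fun i : Fin (n + 1) => i ≠ 0 ∧ i ≠ Fin.last n
  have hform : herm Z Z = ((2 * normSq (Z 0) + ∑ i ∈ S, normSq (Z i) : ℝ) : ℂ) := by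
    simp only [herm, ← h0, mul_conj]
    push_cast
    ring
  rw [hform, ofReal_eq_zero] at hZ
  have hnonneg : ∀ i ∈ S, 0 ≤ normSq (Z i) := fun i _ => normSq_nonneg _
  have hsum := Finset.sum_nonneg hnonneg
  have hZ0 : normSq (Z 0) = 0 := by nlinarith [normSq_nonneg (Z 0)]
  have hZS := (Finset.sum_eq_zero_iff_of_nonneg hnonneg).mp (by linarith)
  funext i
  by_cases hi0 : i = 0
  · subst hi0; exact normSq_eq_zero.mp hZ0
  by_cases hil : i = Fin.last n
  · subst hil; rw [← h0]; exact normSq_eq_zero.mp hZ0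
  · exact normSq_eq_zero.mp (hZS i (by simp [S, hi0, hil]))

lemma herm_ne_zero_of_linearIndependent {P Q : Fin (n + 1) → ℂ} (hP : herm P P = 0)
    (hQ : herm Q Q = 0) (hPQ : LinearIndependent ℂ ![P, Q]) : herm P Q ≠ 0 := by
  intro h
  have hQP : herm Q P = 0 := by rw [herm_swap, h, map_zero]
  by_cases hP0 : P 0 = P (Fin.last n)
  · exact (by simpa using hPQ.ne_zero 0 : P ≠ 0) (eq_zero_of_herm_self_eq_zero hP0 hP)
  -- the combination below is null and has equal first and last coordinates
  set a := Q 0 - Q (Fin.last n)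
  set b := -(P 0 - P (Fin.last n))
  have hb : b ≠ 0 := neg_ne_zero.mpr (sub_ne_zero.mpr hP0)
  have hnull : herm (a • P + b • Q) (a • P + b • Q) = 0 := by
    rw [herm_smul_add_smul_self, hP, hQ, h, hQP]; ring
  have hends : (a • P + b • Q) 0 = (a • P + b • Q) (Fin.last n) := by
    simp only [Pi.add_apply, Pi.smul_apply, smul_eq_mul, a, b]
    ring
  exact hb (LinearIndependent.pair_iff.mp hPQ a b
    (eq_zero_of_herm_self_eq_zero hends hnull)).2

lemma isHermitian_gram (P : Fin 4 → Fin (n + 1) → ℂ) : (gram P).IsHermitian := by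
  ext i j
  exact (herm_swap (P j) (P i)).symm

end HermitianForm

lemma Matrix.conjTranspose_diagonal_mul_mul_diagonal_apply {ι R : Type*} [Fintype ι]
    [DecidableEq ι] [CommSemiring R] [StarRing R] (d : ι → R) (M : Matrix ι ι R) (i j : ι) :
    ((diagonal d)ᴴ * M * diagonal d) i j = star (d i) * M i j * d j := by
  rw [diagonal_conjTranspose, mul_diagonal, diagonal_mul]
  rfl

lemma Matrix.det_fin_three_of_isHermitian_of_diag_eq_zero {M : Matrix (Fin 3) (Fin 3) ℂ}
    (hM : M.IsHermitian) (hdiag : ∀ i, M i i = 0) :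
    M.det = ((2 * (M 0 1 * M 1 2 * M 2 0).re : ℝ) : ℂ) := by
  rw [← add_conj, det_fin_three, hdiag, hdiag, hdiag, ← hM.apply 1 0, ← hM.apply 2 1,
    ← hM.apply 0 2]
  simp only [RCLike.star_def, map_mul]
  ring

lemma Matrix.det_submatrix_three_of_isHermitian_of_diag_eq_zero {m : ℕ}
    {G : Matrix (Fin m) (Fin m) ℂ} (hG : G.IsHermitian) (hdiag : ∀ i, G i i = 0)
    (i j k : Fin m) :
    (G.submatrix ![i, j, k] ![i, j, k]).det = ((2 * (G i j * G j k * G k i).re : ℝ) : ℂ) :=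
  det_fin_three_of_isHermitian_of_diag_eq_zero (hG.submatrix _) fun _ => hdiag _

lemma Complex.exp_I_mul_arg_of_norm_eq_one {z : ℂ} (hz : ‖z‖ = 1) : exp (I * z.arg) = z := by
  simpa [hz, mul_comm] using norm_mul_exp_arg_mul_I z

lemma Complex.two_mul_re_eq_of_div_ofReal_eq_neg {z w : ℂ} {r : ℝ} (h : z / r = -w) :
    2 * w.re = -2 * z.re / r := by
  rw [mul_div_assoc, ← div_ofReal_re, h, neg_re]
  ring

namespace IsNormalizedGram

variable {n : ℕ} {P : Fin 4 → Fin (n + 1) → ℂ} {G : Matrix (Fin 4) (Fin 4) ℂ}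

lemma exists_scaling (hG : IsNormalizedGram P G) :
    ∃ d : Fin 4 → ℂ, (∀ i, d i ≠ 0) ∧ ∀ i j, G i j = conj (d i) * herm (P i) (P j) * d j := by
  obtain ⟨⟨d, hd, rfl⟩, -⟩ := hG
  exact ⟨d, hd, fun i j => conjTranspose_diagonal_mul_mul_diagonal_apply d _ i j⟩

lemma isHermitian (hG : IsNormalizedGram P G) : G.IsHermitian := by
  obtain ⟨⟨d, -, rfl⟩, -⟩ := hG
  exact isHermitian_conjTranspose_mul_mul _ (isHermitian_gram P)

lemma apply_swap (hG : IsNormalizedGram P G) (i j : Fin 4) : G j i = conj (G i j) :=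
  (hG.isHermitian.apply j i).symm

lemma apply_self (hG : IsNormalizedGram P G) (hP : IsNullQuadruple P) (i : Fin 4) :
    G i i = 0 := by
  obtain ⟨d, -, hGd⟩ := hG.exists_scaling
  rw [hGd, hP.2.1, mul_zero, zero_mul]

lemma apply_ne_zero (hG : IsNormalizedGram P G) (hP : IsNullQuadruple P) {i j : Fin 4}
    (hij : i ≠ j) : G i j ≠ 0 := by
  obtain ⟨d, hd, hGd⟩ := hG.exists_scaling
  rw [hGd]
  exact mul_ne_zero (mul_ne_zero (star_ne_zero.mpr (hd i))
    (herm_ne_zero_of_linearIndependent (hP.2.1 i) (hP.2.1 j) (hP.2.2 i j hij))) (hd j)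

lemma det_submatrix_fin_three (hG : IsNormalizedGram P G) (hP : IsNullQuadruple P)
    (i j k : Fin 4) :
    (G.submatrix ![i, j, k] ![i, j, k]).det = ((2 * (G i j * G j k * G k i).re : ℝ) : ℂ) :=
  det_submatrix_three_of_isHermitian_of_diag_eq_zero hG.isHermitian (hG.apply_self hP) i j k

lemma crossRatio_eq (hG : IsNormalizedGram P G) (i j k l : Fin 4) :
    crossRatio (P i) (P j) (P k) (P l) = G k i * G l j / (G l i * G k j) := by
  obtain ⟨d, hd, hGd⟩ := hG.exists_scaling
  have hscale : conj (d k) * d i * (conj (d l) * d j) ≠ 0 := by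
    have := star_ne_zero.mpr (hd k); have := star_ne_zero.mpr (hd l)
    have := hd i; have := hd j
    positivity
  rw [crossRatio, hGd, hGd, hGd, hGd, ← mul_div_mul_left _ _ hscale]
  ring_nf

lemma crossRatio_0123 (hG : IsNormalizedGram P G) :
    crossRatio (P 0) (P 1) (P 2) (P 3) = conj (G 0 2) * conj (G 1 3) / conj (G 0 3) := by
  rw [hG.crossRatio_eq, hG.apply_swap 0 2, hG.apply_swap 1 3, hG.apply_swap 0 3,
    hG.apply_swap 1 2, hG.2.2.1, map_one, mul_one]

lemma crossRatio_0213 (hG : IsNormalizedGram P G) :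
    crossRatio (P 0) (P 2) (P 1) (P 3) = 1 / conj (G 0 3) := by
  rw [hG.crossRatio_eq, hG.apply_swap 0 1, hG.apply_swap 2 3, hG.apply_swap 0 3, hG.2.1,
    hG.2.2.1, hG.2.2.2.1, map_one, mul_one, mul_one]

lemma cartan_eq (hG : IsNormalizedGram P G) (i j k : Fin 4) :
    cartan (P i) (P j) (P k) = (-(G i j * G j k * G k i)).arg := by
  obtain ⟨d, hd, hGd⟩ := hG.exists_scaling
  have hscale : 0 < normSq (d i) * normSq (d j) * normSq (d k) := by
    have := normSq_pos.mpr (hd i); have := normSq_pos.mpr (hd j)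
    have := normSq_pos.mpr (hd k)
    positivity
  rw [cartan, hGd, hGd, hGd, ← arg_real_mul _ hscale]
  congr 1
  simp only [ofReal_mul, normSq_eq_conj_mul_self]
  ring

lemma exp_I_mul_cartan (hG : IsNormalizedGram P G) :
    exp (I * cartan (P 0) (P 1) (P 2)) = -conj (G 0 2) := by
  rw [hG.cartan_eq, hG.2.1, hG.2.2.1, hG.apply_swap 0 2, one_mul, one_mul]
  exact exp_I_mul_arg_of_norm_eq_one (by rw [norm_neg, norm_conj, hG.2.2.2.2])

end IsNormalizedGram

/-- determinants of the principal 3×3 submatrices of the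
normalized Gram matrix in terms of `X₁, X₂, 𝔸`. -/
theorem stmt7 (n : ℕ) (P : Fin 4 → Fin (n + 1) → ℂ) (hP : IsNullQuadruple P)
    (G : Matrix (Fin 4) (Fin 4) ℂ) (hG : IsNormalizedGram P G)
    (X₁ X₂ : ℂ) (A : ℝ)
    (hX₁ : X₁ = crossRatio (P 0) (P 1) (P 2) (P 3))
    (hX₂ : X₂ = crossRatio (P 0) (P 2) (P 1) (P 3))
    (hA : A = cartan (P 0) (P 1) (P 2)) :
    (G.submatrix (![0, 1, 2] : Fin 3 → Fin 4) (![0, 1, 2] : Fin 3 → Fin 4)).det =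
      ((-2 * (Complex.exp (Complex.I * (A : ℂ))).re : ℝ) : ℂ) ∧
    (G.submatrix (![0, 1, 3] : Fin 3 → Fin 4) (![0, 1, 3] : Fin 3 → Fin 4)).det =
      ((-2 * (conj X₁ * Complex.exp (Complex.I * (A : ℂ))).re / ‖X₂‖ ^ 2 : ℝ) : ℂ) ∧
    (G.submatrix (![0, 2, 3] : Fin 3 → Fin 4) (![0, 2, 3] : Fin 3 → Fin 4)).det =
      ((-2 * (conj X₂ * Complex.exp (-(Complex.I * (A : ℂ)))).re / ‖X₂‖ ^ 2 : ℝ) : ℂ) ∧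
    (G.submatrix (![1, 2, 3] : Fin 3 → Fin 4) (![1, 2, 3] : Fin 3 → Fin 4)).det =
      ((-2 * (X₁ * conj X₂ * Complex.exp (-(Complex.I * (A : ℂ)))).re / ‖X₂‖ ^ 2 : ℝ) : ℂ) := by
  have ⟨_, h01, h12, h23, h02⟩ := hG
  subst hX₁ hX₂ hA
  simp only [hG.det_submatrix_fin_three hP, hG.crossRatio_0123, hG.crossRatio_0213,
    Complex.exp_neg, hG.exp_I_mul_cartan, hG.apply_swap 0 3, hG.apply_swap 1 3,
    hG.apply_swap 0 2, h01, h12, h23]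
  have ha : G 0 2 * conj (G 0 2) = 1 := by
    rw [mul_conj, normSq_eq_norm_sq, h02]; norm_num
  have hb : G 0 3 ≠ 0 := hG.apply_ne_zero hP (by decide)
  have hnorm : (‖1 / conj (G 0 3)‖ ^ 2 : ℝ) = (G 0 3 * conj (G 0 3))⁻¹ := by
    rw [mul_conj, norm_div, norm_one, norm_conj, normSq_eq_norm_sq]; push_cast; ring
  have ha' : conj (G 0 2) ≠ 0 := right_ne_zero_of_mul_eq_one ha
  have hb' : conj (G 0 3) ≠ 0 := star_ne_zero.mpr hb
  refine ⟨?_, ?_, ?_, ?_⟩ <;> congr 1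
  · simp only [one_mul, neg_re, conj_re]
    ring
  all_goals
    apply two_mul_re_eq_of_div_ofReal_eq_neg
    rw [hnorm]
    simp only [map_div₀, map_mul, map_one, conj_conj]
    field_simp
  · linear_combination -G 1 3 * ha
  · linear_combination ha
end
end
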